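/- Define recursively n₁ = 0 and n_{k+1} = 2^{n_k} + 1, and let y_n = 2^{-n_k} for n ∈ [n_k, n_{k+1}). Then for every α > 0, inf_{n ∈ ℕ} y_n · n^α = 0; hence the upper decay rate of (y_n) is infinite. -/

import Mathlib

/-!
The blocks `[n_k, n_{k+1})` cover `ℕ`, so `y` is positive, and at the right end
`n = n_{k+1} - 1` of the `k`-th block we have `y_{n+1} (n+1)^α = 2^{-N} N^α` with
`N = n_{k+1}`. Since `2^{-N} N^α → 0` for every real `α`, and `n_{k+1} → ∞`, the infimum of
the nonnegative sequence `y_{n+1} (n+1)^α` is `0` for every `α`.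
-/

open Filter Topology

/-- The sequence `n₁ = 0`, `n_{k+1} = 2^{n_k} + 1` (here `nk 0 = 0`). -/
def nk : ℕ → ℕ
  | 0 => 0
  | k + 1 => 2 ^ nk k + 1

theorem ciInf_eq_of_forall_ge_of_tendsto {ι κ α : Type*} [ConditionallyCompleteLinearOrder α]
    [TopologicalSpace α] [OrderClosedTopology α] {f : ι → α} {b : α} (hf : ∀ i, b ≤ f i)
    {l : Filter κ} [l.NeBot] {φ : κ → ι} (h : Tendsto (f ∘ φ) l (𝓝 b)) :
    ⨅ i, f i = b := by
  have : Nonempty ι := (l.nonempty_of_neBot).map φ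
  refine le_antisymm (ge_of_tendsto h (Eventually.of_forall fun k => ?_)) (le_ciInf hf)
  exact ciInf_le ⟨b, Set.forall_mem_range.2 hf⟩ (φ k)

theorem tendsto_two_rpow_neg_mul_rpow_atTop (a : ℝ) :
    Tendsto (fun x : ℝ => 2 ^ (-x) * x ^ a) atTop (𝓝 0) := by
  refine (tendsto_rpow_mul_exp_neg_mul_atTop_nhds_zero a (Real.log 2)
    (Real.log_pos one_lt_two)).congr fun x => ?_
  rw [Real.rpow_def_of_pos two_pos, mul_comm, neg_mul, mul_neg]

theorem nk_strictMono : StrictMono nk :=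
  strictMono_nat_of_lt_succ fun k => Nat.lt_succ_of_lt (Nat.lt_two_pow_self (n := nk k))

theorem exists_nk_le_lt (m : ℕ) : ∃ k, nk k ≤ m ∧ m < nk (k + 1) := by
  obtain ⟨k, hk, hk'⟩ := nk_strictMono.exists_between_of_tendsto_atTop
    nk_strictMono.tendsto_atTop (x := m + 1) (Nat.succ_pos m)
  exact ⟨k, Nat.le_of_lt_succ hk, hk'⟩

section

variable (y : ℕ → ℝ)
  (hy : ∀ k n : ℕ, nk k ≤ n → n < nk (k + 1) → y n = (2 : ℝ) ^ (-(nk k : ℝ)))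
include hy

theorem pos_of_eq_on_nk_blocks (n : ℕ) : 0 < y n := by
  obtain ⟨k, hk, hk'⟩ := exists_nk_le_lt n
  rw [hy k n hk hk']
  positivity

theorem eq_at_nk_succ_sub_one (a : ℝ) (k : ℕ) :
    y (nk (k + 1) - 1 + 1) * (((nk (k + 1) - 1 : ℕ) : ℝ) + 1) ^ a
      = 2 ^ (-(nk (k + 1) : ℝ)) * (nk (k + 1) : ℝ) ^ a := by
  have hN : nk (k + 1) - 1 + 1 = nk (k + 1) :=
    Nat.sub_add_cancel (nk_strictMono k.succ_pos : nk 0 < nk (k + 1))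
  rw [← Nat.cast_add_one, hN, hy (k + 1) _ le_rfl (nk_strictMono k.succ.lt_succ_self)]

theorem iInf_mul_rpow_eq_zero_of_eq_on_nk_blocks (a : ℝ) :
    ⨅ n : ℕ, y (n + 1) * ((n : ℝ) + 1) ^ a = 0 := by
  refine ciInf_eq_of_forall_ge_of_tendsto (l := atTop) (φ := fun k => nk (k + 1) - 1)
    (fun n => by have := pos_of_eq_on_nk_blocks y hy (n + 1); positivity) ?_
  have hN : Tendsto (fun k => (nk (k + 1) : ℝ)) atTop atTop :=
    tendsto_natCast_atTop_atTop.comp (nk_strictMono.tendsto_atTop.comp (tendsto_add_atTop_nat 1))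
  exact ((tendsto_two_rpow_neg_mul_rpow_atTop a).comp hN).congr fun k =>
    (eq_at_nk_succ_sub_one y hy a k).symm

end

/-- For the sequence `y_n = 2^{-n_k}` for `n ∈ [n_k, n_{k+1})`: for every `α > 0`
we have `inf_{n≥1} y_n n^α = 0`; hence the set `{α ≥ 0 : inf_n y_n n^α > 0}` is
empty, i.e. the upper decay rate is `+∞`. -/
theorem stmt6 (y : ℕ → ℝ)
    (hy : ∀ k n : ℕ, nk k ≤ n → n < nk (k + 1) → y n = (2 : ℝ) ^ (-(nk k : ℝ))) :
    (∀ a : ℝ, 0 < a → (⨅ n : ℕ, y (n + 1) * ((n : ℝ) + 1) ^ a) = 0) ∧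
    {a : ℝ | 0 ≤ a ∧ 0 < ⨅ n : ℕ, y (n + 1) * ((n : ℝ) + 1) ^ a} = ∅ := by
  refine ⟨fun a _ => iInf_mul_rpow_eq_zero_of_eq_on_nk_blocks y hy a, ?_⟩
  refine Set.eq_empty_of_forall_notMem fun a ⟨_, ha⟩ => ?_
  rw [iInf_mul_rpow_eq_zero_of_eq_on_nk_blocks y hy a] at ha
  exact lt_irrefl 0 ha
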